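/- arXiv:2509.08718 — 2 statements merged into one kernel-verified Lean document; each statement's English description precedes it below -/
import Mathlib

section
/- The analytic rank of polynomial maps is subadditive: for all polynomial maps φ, γ : F_p^n → F_p^k of degree at most d, arank_d(φ + γ) ≤ arank_d(φ) + arank_d(γ). -/
open Finset

/-- The probability (over uniform `x ∈ F_p^n`) that two polynomial maps
`φ, ψ : F_p^n → F_p^k` agree. -/
noncomputable def agreeProb (p n k : ℕ) [NeZero p]
    (φ ψ : Fin k → MvPolynomial (Fin n) (ZMod p)) : ℝ :=
  ((Finset.univ.filter fun x : Fin n → ZMod p =>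
      ∀ i, MvPolynomial.eval x (φ i) = MvPolynomial.eval x (ψ i)).card : ℝ) / (p : ℝ) ^ n

/-- The analytic rank of a polynomial map `φ : F_p^n → F_p^k` of degree at most `d`:
`arank_d(φ) = −log_p (max_{ψ : deg ψ < d} Pr_x[φ(x) = ψ(x)])`. -/
noncomputable def arank (p n k d : ℕ) [NeZero p]
    (φ : Fin k → MvPolynomial (Fin n) (ZMod p)) : ℝ :=
  - Real.logb p (sSup {r : ℝ | ∃ ψ : Fin k → MvPolynomial (Fin n) (ZMod p),
      (∀ i, (ψ i).totalDegree < d) ∧ r = agreeProb p n k φ ψ})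

section AuxDegree

open MvPolynomial

variable {σ : Type*} {R : Type*} [CommRing R]

private lemma sv_lemma [Nontrivial R] (i : σ) (a : R) (m : ℕ) :
    (X i + C a) ^ m - (X i : MvPolynomial σ R) ^ m = 0 ∨
      ((X i + C a) ^ m - (X i : MvPolynomial σ R) ^ m).totalDegree < m := by
  rcases Nat.eq_zero_or_pos m with hm | hm
  · left; simp [hm]
  · right
    have hexp : (X i + C a) ^ m - (X i : MvPolynomial σ R) ^ m
        = ∑ j ∈ range m, X i ^ j * C a ^ (m - j) * (m.choose j : MvPolynomial σ R) := by
      rw [add_pow, Finset.sum_range_succ]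
      simp
    rw [hexp]
    refine lt_of_le_of_lt (totalDegree_finset_sum _ _) ?_
    rw [Finset.sup_lt_iff (by simpa using hm : (⊥ : ℕ) < m)]
    intro j hj
    refine lt_of_le_of_lt ?_ (Finset.mem_range.mp hj)
    calc (X i ^ j * C a ^ (m - j) * (m.choose j : MvPolynomial σ R)).totalDegree
        ≤ (X i ^ j * C a ^ (m - j)).totalDegree + (m.choose j : MvPolynomial σ R).totalDegree :=
          totalDegree_mul _ _
      _ ≤ (X i ^ j).totalDegree + (C a ^ (m-j)).totalDegree
            + (m.choose j : MvPolynomial σ R).totalDegree := by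
          gcongr; exact totalDegree_mul _ _
      _ ≤ j := by
          have h1 : (X i ^ j : MvPolynomial σ R).totalDegree ≤ j := by
            simpa using totalDegree_pow (X i : MvPolynomial σ R) j
          have h2 : (C a ^ (m-j) : MvPolynomial σ R).totalDegree = 0 := by
            rw [← C_pow]; exact totalDegree_C _
          have h3 : ((m.choose j : MvPolynomial σ R)).totalDegree = 0 := by
            rw [← C_eq_coe_nat]; exact totalDegree_C _
          omega

private lemma prod_lemma [Nontrivial R] [DecidableEq σ] (h : σ → R) (s : σ →₀ ℕ)
    (t : Finset σ) :
    (∏ i ∈ t, (X i + C (h i)) ^ s i) - (∏ i ∈ t, (X i : MvPolynomial σ R) ^ s i) = 0 ∨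
      ((∏ i ∈ t, (X i + C (h i)) ^ s i) - ∏ i ∈ t, (X i : MvPolynomial σ R) ^ s i).totalDegree
        < ∑ i ∈ t, s i := by
  classical
  induction t using Finset.induction with
  | empty => left; simp
  | @insert i t hit ih =>
    rw [Finset.prod_insert hit, Finset.prod_insert hit, Finset.sum_insert hit]
    set P := ∏ j ∈ t, (X j + C (h j)) ^ s j with hP
    set M := ∏ j ∈ t, (X j : MvPolynomial σ R) ^ s j with hM
    have key : (X i + C (h i)) ^ s i * P - (X i : MvPolynomial σ R) ^ s i * M
        = (X i + C (h i)) ^ s i * (P - M)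
          + ((X i + C (h i)) ^ s i - (X i : MvPolynomial σ R) ^ s i) * M := by ring
    have hdegXC : ((X i + C (h i) : MvPolynomial σ R) ^ s i).totalDegree ≤ s i := by
      refine (totalDegree_pow _ _).trans ?_
      have : (X i + C (h i) : MvPolynomial σ R).totalDegree ≤ 1 := by
        refine (totalDegree_add _ _).trans ?_
        simp [totalDegree_X, totalDegree_C]
      calc s i * (X i + C (h i) : MvPolynomial σ R).totalDegree ≤ s i * 1 := by gcongr
        _ = s i := mul_one _
    have hdegM : M.totalDegree ≤ ∑ j ∈ t, s j := by
      refine (totalDegree_finset_prod _ _).trans ?_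
      refine Finset.sum_le_sum fun j _ => ?_
      refine (totalDegree_pow _ _).trans ?_
      simp [totalDegree_X]
    rw [key]
    rcases ih with ih0 | ihlt
    · rw [ih0, mul_zero, zero_add]
      rcases sv_lemma i (h i) (s i) with h0 | hlt
      · left; rw [h0, zero_mul]
      · right
        refine lt_of_le_of_lt (totalDegree_mul _ _) ?_
        omega
    · right
      have hterm1 : ((X i + C (h i)) ^ s i * (P - M)).totalDegree < s i + ∑ x ∈ t, s x := by
        refine lt_of_le_of_lt (totalDegree_mul _ _) ?_
        omega
      have hterm2 : (((X i + C (h i)) ^ s i - X i ^ s i) * M).totalDegree < s i + ∑ x ∈ t, s x ∨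
          ((X i + C (h i)) ^ s i - X i ^ s i) * M = 0 := by
        rcases sv_lemma i (h i) (s i) with h0 | hlt
        · right; rw [h0, zero_mul]
        · left
          refine lt_of_le_of_lt (totalDegree_mul _ _) ?_
          omega
      rcases hterm2 with hterm2 | hterm2
      · exact lt_of_le_of_lt (totalDegree_add _ _) (max_lt hterm1 hterm2)
      · rw [hterm2, add_zero]; exact hterm1

private lemma shift_deg_le [Nontrivial R] (h : σ → R) (f : MvPolynomial σ R) :
    (bind₁ (fun j => X j + C (h j)) f).totalDegree ≤ f.totalDegree := by
  classical
  conv_lhs => rw [f.as_sum]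
  rw [map_sum]
  refine (totalDegree_finset_sum _ _).trans (Finset.sup_le fun s hs => ?_)
  rw [bind₁_monomial]
  refine (totalDegree_mul _ _).trans ?_
  rw [totalDegree_C, zero_add]
  refine le_trans ?_ (le_totalDegree hs)
  refine (totalDegree_finset_prod _ _).trans ?_
  have : (s.sum fun _ e => e) = ∑ i ∈ s.support, s i := rfl
  rw [this]
  refine Finset.sum_le_sum fun j _ => ?_
  refine (totalDegree_pow _ _).trans ?_
  have : (X j + C (h j) : MvPolynomial σ R).totalDegree ≤ 1 := by
    refine (totalDegree_add _ _).trans ?_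
    simp [totalDegree_X, totalDegree_C]
  calc s j * (X j + C (h j) : MvPolynomial σ R).totalDegree ≤ s j * 1 := by gcongr
    _ = s j := mul_one _

private lemma shift_sub_lt [Nontrivial R] (h : σ → R) (f : MvPolynomial σ R) {e : ℕ}
    (hf : f.totalDegree ≤ e) (he : 1 ≤ e) :
    (bind₁ (fun j => X j + C (h j)) f - f).totalDegree < e := by
  classical
  have hsplit : bind₁ (fun j => X j + C (h j)) f - f
      = ∑ s ∈ f.support, (bind₁ (fun j => X j + C (h j)) (monomial s (coeff s f))
          - monomial s (coeff s f)) := by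
    rw [Finset.sum_sub_distrib, ← map_sum, ← f.as_sum]
  rw [hsplit]
  refine lt_of_le_of_lt (totalDegree_finset_sum _ _) ?_
  rw [Finset.sup_lt_iff (by simpa using Nat.lt_of_lt_of_le Nat.zero_lt_one he : (⊥ : ℕ) < e)]
  intro s hs
  rw [bind₁_monomial, monomial_eq]
  have hprodeq : (Finsupp.prod s fun i k => (X i : MvPolynomial σ R) ^ k)
      = ∏ i ∈ s.support, (X i : MvPolynomial σ R) ^ s i := rfl
  rw [hprodeq, ← mul_sub]
  have hsum : (∑ i ∈ s.support, s i) ≤ e := le_trans (le_totalDegree hs) hf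
  rcases prod_lemma h s s.support with h0 | hlt
  · rw [h0, mul_zero]
    simpa using Nat.lt_of_lt_of_le Nat.zero_lt_one he
  · refine lt_of_le_of_lt (totalDegree_mul _ _) ?_
    rw [totalDegree_C, zero_add]
    omega

private lemma shift_eval (h x : σ → R) (f : MvPolynomial σ R) :
    eval x (bind₁ (fun j => X j + C (h j)) f) = eval (fun j => x j + h j) f := by
  have hrw : (eval x : MvPolynomial σ R →+* R) = eval₂Hom (RingHom.id R) x := rfl
  rw [hrw, eval₂Hom_bind₁]
  simp

end AuxDegree

private lemma count_lemma {G : Type*} [AddCommGroup G] [Fintype G] [DecidableEq G]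
    (A B : Finset G) :
    ∑ h : G, (Finset.univ.filter fun x => x ∈ A ∧ x + h ∈ B).card = A.card * B.card := by
  simp only [Finset.card_filter]
  rw [Finset.sum_comm]
  have key : ∀ x : G, (∑ h : G, if x ∈ A ∧ x + h ∈ B then 1 else 0)
      = if x ∈ A then B.card else 0 := by
    intro x
    by_cases hx : x ∈ A
    · simp only [hx, true_and, if_true]
      rw [← Finset.card_filter]
      exact Finset.card_equiv (Equiv.addLeft x) (by intro i; simp [Equiv.addLeft])
    · simp [hx]
  simp only [key]
  rw [Finset.sum_ite_mem, Finset.univ_inter, Finset.sum_const, smul_eq_mul]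

section AuxMain

open MvPolynomial

variable {p n k d : ℕ} [Fact p.Prime]

private lemma card_space : Fintype.card (Fin n → ZMod p) = p ^ n := by
  rw [Fintype.card_fun, ZMod.card, Fintype.card_fin]

private lemma agreeProb_le_one (φ ψ : Fin k → MvPolynomial (Fin n) (ZMod p)) :
    agreeProb p n k φ ψ ≤ 1 := by
  unfold agreeProb
  have hp0 : (0:ℝ) < (p:ℝ) ^ n := by
    have : (0:ℝ) < p := by exact_mod_cast (Fact.out : p.Prime).pos
    positivity
  rw [div_le_one hp0]
  calc ((Finset.univ.filter fun x : Fin n → ZMod p =>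
      ∀ i, MvPolynomial.eval x (φ i) = MvPolynomial.eval x (ψ i)).card : ℝ)
      ≤ (Fintype.card (Fin n → ZMod p) : ℝ) := by
        exact_mod_cast Finset.card_filter_le _ _
    _ = (p : ℝ) ^ n := by rw [card_space]; push_cast; ring

/-- The set appearing in the definition of `arank`. -/
private def arSet (p n k d : ℕ) [NeZero p]
    (φ : Fin k → MvPolynomial (Fin n) (ZMod p)) : Set ℝ :=
  {r : ℝ | ∃ ψ : Fin k → MvPolynomial (Fin n) (ZMod p),
      (∀ i, (ψ i).totalDegree < d) ∧ r = agreeProb p n k φ ψ}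

private lemma arank_eq (φ : Fin k → MvPolynomial (Fin n) (ZMod p)) :
    arank p n k d φ = - Real.logb p (sSup (arSet p n k d φ)) := rfl

private lemma arSet_bddAbove (φ : Fin k → MvPolynomial (Fin n) (ZMod p)) :
    BddAbove (arSet p n k d φ) := by
  refine ⟨1, fun r hr => ?_⟩
  obtain ⟨ψ, -, rfl⟩ := hr
  exact agreeProb_le_one φ ψ

private lemma arSet_finite (φ : Fin k → MvPolynomial (Fin n) (ZMod p)) :
    (arSet p n k d φ).Finite := by
  refine Set.Finite.subset (Set.Finite.image (fun c : ℕ => (c : ℝ) / (p : ℝ) ^ n)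
    (Set.finite_Iic (p ^ n))) ?_
  rintro r ⟨ψ, -, rfl⟩
  refine ⟨_, ?_, rfl⟩
  simp only [Set.mem_Iic]
  calc (Finset.univ.filter fun x : Fin n → ZMod p =>
      ∀ i, MvPolynomial.eval x (φ i) = MvPolynomial.eval x (ψ i)).card
      ≤ Fintype.card (Fin n → ZMod p) := Finset.card_filter_le _ _
    _ = p ^ n := card_space

private lemma arSet_nonempty (hkd : ∀ _ : Fin k, 1 ≤ d)
    (φ : Fin k → MvPolynomial (Fin n) (ZMod p)) :
    (arSet p n k d φ).Nonempty :=
  ⟨_, ⟨fun i => C (eval 0 (φ i)), fun i => by rw [totalDegree_C]; exact hkd i, rfl⟩⟩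

private lemma arSet_sSup_pos (hkd : ∀ _ : Fin k, 1 ≤ d)
    (φ : Fin k → MvPolynomial (Fin n) (ZMod p)) :
    0 < sSup (arSet p n k d φ) := by
  have hmem : agreeProb p n k φ (fun i => C (eval 0 (φ i))) ∈ arSet p n k d φ :=
    ⟨fun i => C (eval 0 (φ i)), fun i => by rw [totalDegree_C]; exact hkd i, rfl⟩
  refine lt_of_lt_of_le ?_ (le_csSup (arSet_bddAbove φ) hmem)
  unfold agreeProb
  have hp0 : (0:ℝ) < (p:ℝ) ^ n := by
    have : (0:ℝ) < p := by exact_mod_cast (Fact.out : p.Prime).pos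
    positivity
  refine div_pos ?_ hp0
  have h0 : (0 : Fin n → ZMod p) ∈ Finset.univ.filter fun x : Fin n → ZMod p =>
      ∀ i, MvPolynomial.eval x (φ i) = MvPolynomial.eval x ((fun i => C (eval 0 (φ i))) i) := by
    simp
  have hcard := Finset.card_pos.mpr ⟨_, h0⟩
  exact_mod_cast hcard

/-- Key lemma: there is `ψ` of low degree with
`agreeProb (φ+γ) ψ ≥ agreeProb φ ψ₁ * agreeProb γ ψ₂`. -/
private lemma key_lemma (hkd : ∀ _ : Fin k, 1 ≤ d)
    (φ γ ψ₁ ψ₂ : Fin k → MvPolynomial (Fin n) (ZMod p))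
    (hγ : ∀ i, (γ i).totalDegree ≤ d)
    (hψ₁ : ∀ i, (ψ₁ i).totalDegree < d) (hψ₂ : ∀ i, (ψ₂ i).totalDegree < d) :
    ∃ ψ : Fin k → MvPolynomial (Fin n) (ZMod p), (∀ i, (ψ i).totalDegree < d) ∧
      agreeProb p n k φ ψ₁ * agreeProb p n k γ ψ₂ ≤
        agreeProb p n k (fun i => φ i + γ i) ψ := by
  classical
  set A := Finset.univ.filter fun x : Fin n → ZMod p =>
      ∀ i, MvPolynomial.eval x (φ i) = MvPolynomial.eval x (ψ₁ i) with hA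
  set B := Finset.univ.filter fun x : Fin n → ZMod p =>
      ∀ i, MvPolynomial.eval x (γ i) = MvPolynomial.eval x (ψ₂ i) with hB
  have hsum := count_lemma A B
  have hcardH : (Finset.univ : Finset (Fin n → ZMod p)).card = p ^ n := by
    rw [Finset.card_univ, card_space]
  obtain ⟨h, -, hgood⟩ : ∃ h : Fin n → ZMod p, h ∈ Finset.univ ∧
      A.card * B.card ≤ p ^ n * (Finset.univ.filter fun x => x ∈ A ∧ x + h ∈ B).card := by
    refine Finset.exists_le_of_sum_le Finset.univ_nonempty ?_
    rw [Finset.sum_const, hcardH, ← Finset.mul_sum, hsum, smul_eq_mul, Nat.mul_comm]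
  set T : MvPolynomial (Fin n) (ZMod p) →ₐ[ZMod p] MvPolynomial (Fin n) (ZMod p) :=
    bind₁ (fun j => X j + C (h j)) with hT
  refine ⟨fun i => ψ₁ i + T (ψ₂ i) + (γ i - T (γ i)), fun i => ?_, ?_⟩
  · refine lt_of_le_of_lt (totalDegree_add _ _) (max_lt (lt_of_le_of_lt (totalDegree_add _ _)
      (max_lt (hψ₁ i) ?_)) ?_)
    · exact lt_of_le_of_lt (shift_deg_le h (ψ₂ i)) (hψ₂ i)
    · have hneg : γ i - T (γ i) = -(T (γ i) - γ i) := by ring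
      rw [hneg, totalDegree_neg]
      exact shift_sub_lt h (γ i) (hγ i) (hkd i)
  · have hsub : (Finset.univ.filter fun x => x ∈ A ∧ x + h ∈ B) ⊆
        Finset.univ.filter fun x : Fin n → ZMod p =>
          ∀ i, MvPolynomial.eval x (φ i + γ i) =
            MvPolynomial.eval x (ψ₁ i + T (ψ₂ i) + (γ i - T (γ i))) := by
      intro x hx
      rw [Finset.mem_filter] at hx
      obtain ⟨-, hxA, hxB⟩ := hx
      rw [hA, Finset.mem_filter] at hxA
      rw [hB, Finset.mem_filter] at hxB
      rw [Finset.mem_filter]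
      refine ⟨Finset.mem_univ _, fun i => ?_⟩
      have e1 : MvPolynomial.eval x (φ i) = MvPolynomial.eval x (ψ₁ i) := hxA.2 i
      have e2 : MvPolynomial.eval (fun j => x j + h j) (γ i)
          = MvPolynomial.eval (fun j => x j + h j) (ψ₂ i) := by
        exact hxB.2 i
      simp only [map_add, map_sub, hT, shift_eval]
      rw [e1, ← e2]
      ring
    have hcard : (Finset.univ.filter fun x => x ∈ A ∧ x + h ∈ B).card ≤
        (Finset.univ.filter fun x : Fin n → ZMod p =>
          ∀ i, MvPolynomial.eval x (φ i + γ i) =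
            MvPolynomial.eval x (ψ₁ i + T (ψ₂ i) + (γ i - T (γ i)))).card :=
      Finset.card_le_card hsub
    have hp0 : (0:ℝ) < (p:ℝ) ^ n := by
      have : (0:ℝ) < p := by exact_mod_cast (Fact.out : p.Prime).pos
      positivity
    unfold agreeProb
    rw [div_mul_div_comm, div_le_div_iff₀ (by positivity) hp0]
    have hnat : A.card * B.card ≤ p ^ n * (Finset.univ.filter fun x : Fin n → ZMod p =>
          ∀ i, MvPolynomial.eval x (φ i + γ i) =
            MvPolynomial.eval x (ψ₁ i + T (ψ₂ i) + (γ i - T (γ i)))).card :=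
      le_trans hgood (Nat.mul_le_mul_left _ hcard)
    have hnatR : (A.card : ℝ) * B.card ≤ (p:ℝ) ^ n
        * (Finset.univ.filter fun x : Fin n → ZMod p =>
          ∀ i, MvPolynomial.eval x (φ i + γ i) =
            MvPolynomial.eval x (ψ₁ i + T (ψ₂ i) + (γ i - T (γ i)))).card := by
      exact_mod_cast hnat
    nlinarith [hp0]

end AuxMain

/-- Sub-additivity of the analytic rank: for polynomial maps `φ, γ` of degree at most `d`,
`arank_d(φ + γ) ≤ arank_d(φ) + arank_d(γ)`. -/
theorem stmt6 (p n k d : ℕ) [Fact p.Prime]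
    (φ γ : Fin k → MvPolynomial (Fin n) (ZMod p))
    (hφ : ∀ i, (φ i).totalDegree ≤ d) (hγ : ∀ i, (γ i).totalDegree ≤ d) :
    arank p n k d (fun i => φ i + γ i) ≤ arank p n k d φ + arank p n k d γ := by
  classical
  rw [arank_eq, arank_eq, arank_eq]
  by_cases hkd : ∀ _ : Fin k, 1 ≤ d
  · obtain ⟨ψ₁, hψ₁, hval₁⟩ := (arSet_nonempty hkd φ).csSup_mem (arSet_finite φ)
    obtain ⟨ψ₂, hψ₂, hval₂⟩ := (arSet_nonempty hkd γ).csSup_mem (arSet_finite γ)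
    obtain ⟨ψ, hψdeg, hle⟩ := key_lemma hkd φ γ ψ₁ ψ₂ hγ hψ₁ hψ₂
    have hmem : agreeProb p n k (fun i => φ i + γ i) ψ
        ∈ arSet p n k d (fun i => φ i + γ i) := ⟨ψ, hψdeg, rfl⟩
    have h2 : sSup (arSet p n k d φ) * sSup (arSet p n k d γ)
        ≤ sSup (arSet p n k d (fun i => φ i + γ i)) := by
      rw [hval₁, hval₂]
      exact le_trans hle (le_csSup (arSet_bddAbove _) hmem)
    have ha : 0 < sSup (arSet p n k d φ) := arSet_sSup_pos hkd φ
    have hb : 0 < sSup (arSet p n k d γ) := arSet_sSup_pos hkd γ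
    have hb1 : (1:ℝ) < p := by exact_mod_cast (Fact.out : p.Prime).one_lt
    have hlog : Real.logb p (sSup (arSet p n k d φ) * sSup (arSet p n k d γ))
        ≤ Real.logb p (sSup (arSet p n k d (fun i => φ i + γ i))) :=
      Real.logb_le_logb_of_le hb1 (mul_pos ha hb) h2
    rw [Real.logb_mul ha.ne' hb.ne'] at hlog
    linarith
  · push_neg at hkd
    obtain ⟨i₀, hd⟩ := hkd
    have hempty : ∀ χ : Fin k → MvPolynomial (Fin n) (ZMod p),
        arSet p n k d χ = (∅ : Set ℝ) := by
      intro χ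
      ext r
      simp only [Set.mem_empty_iff_false, iff_false]
      rintro ⟨ψ, hdeg, -⟩
      have := hdeg i₀
      omega
    rw [hempty, hempty, hempty, Real.sSup_empty, Real.logb_zero]
    norm_num
end

section
/- Let f : F_2^n → {−1, 1} and f' : F_2^n → {−1, 1} with normalized Hamming distance δ(f', f) ≤ 1/4 − (1/4)√(1/2 + ε) for some ε > 0, where f(x) = (−1)^{⟨x, Mx⟩ + ⟨b,x⟩ + c} is a quadratic phase. Then for each fixed h ∈ F_2^n, the Fourier coefficient of the multiplicative derivative satisfies |Δ̂_h f'((M + Mᵀ)h)|² ≥ ( E_x (−1)^{c(x)+c(x+h)} )² where c(x) = 1[f'(x) ≠ f(x)], and if additionally δ(f',f) ≤ 1/4 − (1/4)√(1/2+ε) then Pr_x[f'(x)f'(x+h) = f(x)f(x+h)] ≥ 1/2 + (1/2)√(1/2+ε), so |Δ̂_h f'((M+Mᵀ)h)|² ≥ 1/2 + ε. -/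
open Finset


lemma zmod2_elim (a : ZMod 2) : a = 0 ∨ a = 1 := by revert a; decide

lemma zmod2_add_self (a : ZMod 2) : a + a = 0 := by revert a; decide

lemma neg_one_val_add (a b : ZMod 2) : ((-1:ℝ))^(a+b).val = (-1)^a.val * (-1)^b.val := by
  rcases zmod2_elim a with ha|ha <;> rcases zmod2_elim b with hb|hb <;> subst ha <;> subst hb <;>
    norm_num [show ZMod.val (2 : ZMod 2) = 0 from rfl, show ZMod.val (1 : ZMod 2) = 1 from rfl,
      show ZMod.val (0 : ZMod 2) = 0 from rfl]

lemma exp_ident19 (n : ℕ) (M : Matrix (Fin n) (Fin n) (ZMod 2)) (b : Fin n → ZMod 2) (c : ZMod 2)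
    (x h : Fin n → ZMod 2) :
    (dotProduct (x+h) (M.mulVec (x+h)) + dotProduct b (x+h) + c)
      + (dotProduct x (M.mulVec x) + dotProduct b x + c)
    = dotProduct x ((M + M.transpose).mulVec h)
      + (dotProduct h (M.mulVec h) + dotProduct b h) := by
  have htr : dotProduct h (M.mulVec x) = dotProduct x (M.transpose.mulVec h) := by
    rw [Matrix.dotProduct_mulVec, dotProduct_comm, Matrix.mulVec_transpose]
  have h2 : (2 : ZMod 2) = 0 := rfl
  simp only [Matrix.add_mulVec, dotProduct_add, Matrix.mulVec_add,
    add_dotProduct, htr]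
  linear_combination (dotProduct x (M.mulVec x) + dotProduct b x + c) * h2

lemma aux_term19 (u v F G p s : ℝ) (hu : u = 1 ∨ u = -1) (hv : v = 1 ∨ v = -1)
    (hF : F = 1 ∨ F = -1) (hG : G = 1 ∨ G = -1)
    (hFG : G * F = p * s) (hp : p * p = 1) :
    v * u * p = s * ((if u = F then (1:ℝ) else -1) * (if v = G then (1:ℝ) else -1)) := by
  have hs : s = p * (G * F) := by linear_combination (-p) * hFG + (-s) * hp
  rw [hs]
  rcases hu with hu|hu <;> rcases hv with hv|hv <;> rcases hF with hF|hF <;>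
    rcases hG with hG|hG <;> subst hu <;> subst hv <;> subst hF <;> subst hG <;> norm_num

lemma aux_ind19 (u v F G : ℝ) (hu : u = 1 ∨ u = -1) (hv : v = 1 ∨ v = -1)
    (hF : F = 1 ∨ F = -1) (hG : G = 1 ∨ G = -1) :
    (if u = F then (1:ℝ) else -1) * (if v = G then (1:ℝ) else -1)
      = if u * v = F * G then (1:ℝ) else -1 := by
  rcases hu with hu|hu <;> rcases hv with hv|hv <;> rcases hF with hF|hF <;>
    rcases hG with hG|hG <;> subst hu <;> subst hv <;> subst hF <;> subst hG <;> norm_num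

/-- Decoding a corrupted quadratic phase within the unique-decoding radius.
Let `f(x) = (−1)^{⟨x,Mx⟩ + ⟨b,x⟩ + c}` be a quadratic phase on `F_2^n` and let
`f' : F_2^n → {−1,1}` satisfy `δ(f', f) ≤ 1/4 − (1/4)√(1/2 + ε)` for some `ε > 0`.
Then for each fixed `h`:
1. `|Δ̂_h f'((M+Mᵀ)h)|² ≥ (E_x (−1)^{c(x)+c(x+h)})²`, where `c(x) = 1[f'(x) ≠ f(x)]`;
2. `Pr_x[f'(x)f'(x+h) = f(x)f(x+h)] ≥ 1/2 + (1/2)√(1/2+ε)`;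
3. consequently `|Δ̂_h f'((M+Mᵀ)h)|² ≥ 1/2 + ε`.
Here `Δ̂_h g(a) = E_x g(x+h)·g(x)·(−1)^{⟨x,a⟩}`. -/
theorem stmt19 (n : ℕ) (ε : ℝ) (hε : 0 < ε)
    (M : Matrix (Fin n) (Fin n) (ZMod 2)) (b : Fin n → ZMod 2) (c : ZMod 2)
    (f f' : (Fin n → ZMod 2) → ℝ)
    (hf : ∀ x, f x = (-1 : ℝ) ^ (dotProduct x (M.mulVec x)
        + dotProduct b x + c).val)
    (hf' : ∀ x, f' x = 1 ∨ f' x = -1)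
    (hδ : ((Finset.univ.filter fun x : Fin n → ZMod 2 => f' x ≠ f x).card : ℝ) / 2 ^ n
        ≤ 1 / 4 - (1 / 4) * Real.sqrt (1 / 2 + ε))
    (h : Fin n → ZMod 2) :
    (((∑ x : Fin n → ZMod 2,
          (if f' x = f x then (1 : ℝ) else -1) * (if f' (x + h) = f (x + h) then (1 : ℝ) else -1))
        / 2 ^ n) ^ 2
      ≤ ((∑ x : Fin n → ZMod 2, f' (x + h) * f' x *
            (-1 : ℝ) ^ (dotProduct x ((M + M.transpose).mulVec h)).val) / 2 ^ n) ^ 2)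
    ∧ (1 / 2 + (1 / 2) * Real.sqrt (1 / 2 + ε)
        ≤ ((Finset.univ.filter fun x : Fin n → ZMod 2 =>
              f' x * f' (x + h) = f x * f (x + h)).card : ℝ) / 2 ^ n)
    ∧ (1 / 2 + ε
        ≤ ((∑ x : Fin n → ZMod 2, f' (x + h) * f' x *
              (-1 : ℝ) ^ (dotProduct x ((M + M.transpose).mulVec h)).val) / 2 ^ n) ^ 2) := by
  have hNpos : (0:ℝ) < 2 ^ n := by positivity
  have hfval : ∀ x, f x = 1 ∨ f x = -1 := by
    intro x
    rw [hf x]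
    rcases Nat.even_or_odd ((dotProduct x (M.mulVec x)
        + dotProduct b x + c).val) with he|ho
    · exact Or.inl (Even.neg_one_pow he)
    · exact Or.inr (Odd.neg_one_pow ho)
  -- notation
  set s : ℝ := (-1:ℝ)^((dotProduct h (M.mulVec h) + dotProduct b h)).val with hs
  have hpsq : ∀ m : ℕ, ((-1:ℝ))^m * (-1)^m = 1 := by
    intro m; rw [← mul_pow]; norm_num
  have hff : ∀ x : Fin n → ZMod 2, f (x+h) * f x
      = (-1:ℝ)^(dotProduct x ((M + M.transpose).mulVec h)).val * s := by
    intro x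
    rw [hf (x+h), hf x, ← neg_one_val_add, exp_ident19 n M b c x h, neg_one_val_add]
  -- pointwise term identity
  have hterm : ∀ x : Fin n → ZMod 2,
      f' (x+h) * f' x * (-1:ℝ)^(dotProduct x ((M + M.transpose).mulVec h)).val
      = s * ((if f' x = f x then (1:ℝ) else -1) * (if f' (x+h) = f (x+h) then (1:ℝ) else -1)) := by
    intro x
    exact aux_term19 (f' x) (f' (x+h)) (f x) (f (x+h)) _ s (hf' x) (hf' (x+h))
      (hfval x) (hfval (x+h)) (hff x) (hpsq _)
  set T : ℝ := ∑ x : Fin n → ZMod 2,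
      (if f' x = f x then (1:ℝ) else -1) * (if f' (x+h) = f (x+h) then (1:ℝ) else -1) with hT
  have hS : (∑ x : Fin n → ZMod 2, f' (x + h) * f' x *
        (-1 : ℝ) ^ (dotProduct x ((M + M.transpose).mulVec h)).val) = s * T := by
    rw [hT, Finset.mul_sum]
    exact Finset.sum_congr rfl fun x _ => hterm x
  have hssq : s * s = 1 := hpsq _
  have heq : (T / 2^n)^2 = ((∑ x : Fin n → ZMod 2, f' (x + h) * f' x *
        (-1 : ℝ) ^ (dotProduct x ((M + M.transpose).mulVec h)).val) / 2 ^ n) ^ 2 := by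
    rw [hS]
    field_simp
    nlinarith [hssq, sq_nonneg T, sq_nonneg s]
  -- counting
  set A : Finset (Fin n → ZMod 2) := Finset.univ.filter fun x => f' x ≠ f x with hA
  set B : Finset (Fin n → ZMod 2) := Finset.univ.filter fun x => f' (x+h) ≠ f (x+h) with hB
  have hinv : ∀ x : Fin n → ZMod 2, x + h + h = x := by
    intro x; funext i
    simp [add_assoc, zmod2_add_self]
  have hBcard : B.card = A.card := by
    apply Finset.card_bij' (fun x _ => x + h) (fun y _ => y + h)
    · intro a ha
      simp only [hB, Finset.mem_filter, Finset.mem_univ, true_and] at ha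
      simp only [hA, Finset.mem_filter, Finset.mem_univ, true_and]
      exact ha
    · intro a ha
      simp only [hA, Finset.mem_filter, Finset.mem_univ, true_and] at ha
      simp only [hB, Finset.mem_filter, Finset.mem_univ, true_and]
      rw [hinv]
      exact ha
    · intro a _; exact hinv a
    · intro a _; exact hinv a
  set G : Finset (Fin n → ZMod 2) := Finset.univ.filter fun x =>
      f' x * f' (x+h) = f x * f (x+h) with hG
  set Gc : Finset (Fin n → ZMod 2) := Finset.univ.filter fun x =>
      ¬ (f' x * f' (x+h) = f x * f (x+h)) with hGc
  have hGGc : G.card + Gc.card = 2^n := by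
    rw [hG, hGc, Finset.card_filter_add_card_filter_not]
    simp [Finset.card_univ]
  have hGcsub : Gc ⊆ A ∪ B := by
    intro x hx
    simp only [hGc, Finset.mem_filter, Finset.mem_univ, true_and] at hx
    simp only [Finset.mem_union, hA, hB, Finset.mem_filter, Finset.mem_univ, true_and]
    by_contra hcon
    push_neg at hcon
    exact hx (by rw [hcon.1, hcon.2])
  have hGcle : (Gc.card : ℝ) ≤ 2 * A.card := by
    have h1 : Gc.card ≤ (A ∪ B).card := Finset.card_le_card hGcsub
    have h2 : (A ∪ B).card ≤ A.card + B.card := Finset.card_union_le A B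
    have : Gc.card ≤ 2 * A.card := by omega
    exact_mod_cast this
  -- part 2
  have part2 : 1 / 2 + (1 / 2) * Real.sqrt (1 / 2 + ε) ≤ (G.card : ℝ) / 2 ^ n := by
    have hAδ : (A.card : ℝ) ≤ (1 / 4 - (1 / 4) * Real.sqrt (1 / 2 + ε)) * 2 ^ n := by
      rw [← div_le_iff₀ hNpos]
      exact hδ
    have hGsum : (G.card : ℝ) + (Gc.card : ℝ) = 2 ^ n := by exact_mod_cast hGGc
    rw [le_div_iff₀ hNpos]
    nlinarith [hGcle, hGsum, hAδ]
  refine ⟨heq.le, part2, ?_⟩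
  -- part 3
  have hTval : T = (G.card : ℝ) - (Gc.card : ℝ) := by
    rw [hT]
    have : ∀ x : Fin n → ZMod 2,
        (if f' x = f x then (1:ℝ) else -1) * (if f' (x+h) = f (x+h) then (1:ℝ) else -1)
        = if f' x * f' (x+h) = f x * f (x+h) then (1:ℝ) else -1 :=
      fun x => aux_ind19 (f' x) (f' (x+h)) (f x) (f (x+h)) (hf' x) (hf' (x+h))
        (hfval x) (hfval (x+h))
    rw [Finset.sum_congr rfl fun x _ => this x, Finset.sum_ite, Finset.sum_const,
      Finset.sum_const]
    simp [hG, hGc]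
    ring
  have hsqrtnn : 0 ≤ Real.sqrt (1 / 2 + ε) := Real.sqrt_nonneg _
  have hGsum : (G.card : ℝ) + (Gc.card : ℝ) = 2 ^ n := by exact_mod_cast hGGc
  have hTle : Real.sqrt (1 / 2 + ε) ≤ T / 2 ^ n := by
    rw [hTval, le_div_iff₀ hNpos]
    have := (le_div_iff₀ hNpos).mp part2
    nlinarith
  have hsq : (Real.sqrt (1 / 2 + ε))^2 ≤ (T / 2 ^ n)^2 :=
    pow_le_pow_left₀ hsqrtnn hTle 2
  rw [Real.sq_sqrt (by positivity)] at hsq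
  rw [← heq]
  exact hsq
end
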